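/- Every nonempty compact invariant set of a homeomorphism of a metric space contains a recurrent point. -/
import Mathlib


open Filter Topology

/-- A point `y` is recurrent for `f` if some strictly increasing sequence of
positive integers `n i` satisfies `f^[n i] y → y`. -/
def IsRecurrentPt {X : Type*} [MetricSpace X] (f : X → X) (y : X) : Prop :=
  ∃ n : ℕ → ℕ, StrictMono n ∧ (∀ i, 0 < n i) ∧
    Tendsto (fun i => f^[n i] y) atTop (𝓝 y)

/-- Every nonempty compact invariant set of a homeomorphism of a metric space
contains a recurrent point. -/
theorem compact_invariant_contains_recurrent {X : Type*} [MetricSpace X]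
    (f : X ≃ₜ X) (A : Set X) (hA : IsCompact A) (hne : A.Nonempty)
    (hinv : f '' A = A) :
    ∃ y ∈ A, IsRecurrentPt f y := by
  classical
  set S : Set (Set X) := {B | B.Nonempty ∧ B ⊆ A ∧ IsClosed B ∧ f '' B = B} with hS
  have hAS : A ∈ S := ⟨hne, subset_rfl, hA.isClosed, hinv⟩
  -- Zorn's lemma: minimal element of S
  obtain ⟨M, hMA, hMmin⟩ := zorn_superset_nonempty S
    (fun c hcS hchain hcne => by
      haveI : Nonempty c := hcne.to_subtype
      have hdir : DirectedOn (· ⊇ ·) c := fun x hx y hy => by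
        rcases hchain.total hx hy with h | h
        · exact ⟨x, hx, subset_rfl, h⟩
        · exact ⟨y, hy, h, subset_rfl⟩
      have hne' : (⋂₀ c).Nonempty :=
        IsCompact.nonempty_sInter_of_directed_nonempty_isCompact_isClosed hdir
          (fun U hU => (hcS hU).1)
          (fun U hU => hA.of_isClosed_subset (hcS hU).2.2.1 (hcS hU).2.1)
          (fun U hU => (hcS hU).2.2.1)
      refine ⟨⋂₀ c, ⟨hne', ?_, isClosed_sInter fun U hU => (hcS hU).2.2.1, ?_⟩,
        fun s hs => Set.sInter_subset_of_mem hs⟩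
      · obtain ⟨U, hU⟩ := hcne
        exact (Set.sInter_subset_of_mem hU).trans (hcS hU).2.1
      · rw [Set.sInter_eq_iInter, Set.image_iInter f.bijective]
        exact Set.iInter_congr fun U => (hcS U.2).2.2.2) A hAS
  obtain ⟨hMS, hMmin⟩ := hMmin
  obtain ⟨hMne, hMA', hMcl, hMinv⟩ := hMS
  have hMcomp : IsCompact M := hA.of_isClosed_subset hMcl hMA'
  obtain ⟨y, hy⟩ := hMne
  -- iterates of y stay in M
  have hiter : ∀ m, f^[m] y ∈ M := by
    intro m
    induction m with
    | zero => exact hy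
    | succ m ih =>
      rw [Function.iterate_succ_apply']
      rw [← hMinv]
      exact Set.mem_image_of_mem f ih
  -- the omega-limit set
  set orb : ℕ → Set X := fun N => Set.range (fun k => f^[N + 1 + k] y) with horb
  set t : ℕ → Set X := fun N => closure (orb N) with ht
  have horbM : ∀ N, orb N ⊆ M := by
    rintro N x ⟨k, rfl⟩; exact hiter _
  have htM : ∀ N, t N ⊆ M := fun N => closure_minimal (horbM N) hMcl
  have htmono : ∀ N, t (N + 1) ⊆ t N := by
    intro N
    apply closure_mono
    rintro x ⟨k, rfl⟩
    exact ⟨k + 1, congrArg (fun m => f^[m] y) (by omega)⟩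
  have htne : ∀ N, (t N).Nonempty := fun N =>
    ⟨f^[N + 1] y, subset_closure ⟨0, by simp⟩⟩
  have htcl : ∀ N, IsClosed (t N) := fun N => isClosed_closure
  have hΩne : (⋂ N, t N).Nonempty :=
    IsCompact.nonempty_iInter_of_sequence_nonempty_isCompact_isClosed t htmono htne
      (hMcomp.of_isClosed_subset (htcl 0) (htM 0)) htcl
  have himg : ∀ N, f '' t N = t (N + 1) := by
    intro N
    have : f '' orb N = orb (N + 1) := by
      ext x
      constructor
      · rintro ⟨_, ⟨k, rfl⟩, rfl⟩
        refine ⟨k, ?_⟩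
        rw [← Function.iterate_succ_apply' f]
        exact congrArg (fun m => f^[m] y) (by omega)
      · rintro ⟨k, rfl⟩
        refine ⟨f^[N + 1 + k] y, ⟨k, rfl⟩, ?_⟩
        rw [← Function.iterate_succ_apply' f]
        exact congrArg (fun m => f^[m] y) (by omega)
    calc f '' t N = closure (f '' orb N) := f.image_closure (orb N)
      _ = t (N + 1) := by rw [this]
  have hΩinv : f '' (⋂ N, t N) = ⋂ N, t N := by
    rw [Set.image_iInter f.bijective]
    apply subset_antisymm
    · intro x hx
      simp only [Set.mem_iInter] at hx ⊢
      intro N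
      have := hx N
      rw [himg N] at this
      exact htmono N this
    · intro x hx
      simp only [Set.mem_iInter] at hx ⊢
      intro N
      rw [himg N]
      exact hx (N + 1)
  have hΩS : (⋂ N, t N) ∈ S :=
    ⟨hΩne, (Set.iInter_subset t 0).trans ((htM 0).trans hMA'),
      isClosed_iInter htcl, hΩinv⟩
  have hMΩ : M ⊆ ⋂ N, t N :=
    hMmin hΩS ((Set.iInter_subset t 0).trans (htM 0))
  have hyΩ : y ∈ ⋂ N, t N := hMΩ hy
  -- extract recurrence sequence
  have key : ∀ N i : ℕ, ∃ m, N < m ∧ dist (f^[m] y) y < 1 / ((i : ℝ) + 1) := by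
    intro N i
    have hyN : y ∈ t N := Set.mem_iInter.mp hyΩ N
    have hε : (0 : ℝ) < 1 / ((i : ℝ) + 1) := by positivity
    obtain ⟨b, hb, hdb⟩ := Metric.mem_closure_iff.mp hyN _ hε
    obtain ⟨k, rfl⟩ := hb
    exact ⟨N + 1 + k, by omega, by rwa [dist_comm]⟩
  choose F h1 h2 using key
  set n : ℕ → ℕ := fun i => Nat.rec (F 0 0) (fun i prev => F prev (i + 1)) i with hn
  have hsucc : ∀ i, n (i + 1) = F (n i) (i + 1) := fun i => rfl
  have hmono : StrictMono n := strictMono_nat_of_lt_succ fun i => by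
    rw [hsucc]; exact h1 (n i) (i + 1)
  have hpos : ∀ i, 0 < n i := by
    intro i
    induction i with
    | zero => exact h1 0 0
    | succ i ih => exact ih.trans (hmono (Nat.lt_succ_self i))
  have hdist : ∀ i, dist (f^[n i] y) y < 1 / ((i : ℝ) + 1) := by
    intro i
    cases i with
    | zero => exact h2 0 0
    | succ i =>
      rw [hsucc]
      have := h2 (n i) (i + 1)
      simpa using this
  refine ⟨y, hMA' hy, n, hmono, hpos, ?_⟩
  rw [tendsto_iff_dist_tendsto_zero]
  exact squeeze_zero (fun i => dist_nonneg) (fun i => (hdist i).le)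
    tendsto_one_div_add_atTop_nhds_zero_nat
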